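/- Let k ≥ 1, m ≥ 2, let w* ∈ ℝ^m be nonzero, let 0 < λ < 1/2, and let w_0 ∈ ℝ^m be nonzero with 0 < θ_0 < π. Define the gradient descent sequence w_{t+1} = w_t − λ·G(w_t). Then for every t ≥ 0, ‖w_t‖ ≥ min{ ‖w_0‖·sin θ_0, ‖w*‖·sin² θ_0 / (α(k)·π), ‖w*‖/8 }. -/

import Mathlib

open scoped RealInnerProductSpace
open InnerProductGeometry Real Classical

/-- The ReLU function `σ(z) = max{z, 0}`. -/
noncomputable def relu (z : ℝ) : ℝ := max z 0

/-- `g u v = (1/(2π))·‖u‖·‖v‖·(sin θ_{u,v} + (π − θ_{u,v})·cos θ_{u,v})`. -/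
noncomputable def g {E : Type*} [NormedAddCommGroup E] [InnerProductSpace ℝ E]
    (u v : E) : ℝ :=
  (1 / (2 * π)) * ‖u‖ * ‖v‖ *
    (Real.sin (angle u v) + (π - angle u v) * Real.cos (angle u v))

/-- The no-overlap population loss
`ℓ(w) = (1/k²)·(γ‖w‖² − 2k·g(w,w*) − 2β‖w‖‖w*‖ + γ‖w*‖²)`,
where `β = (k²−k)/(2π)` and `γ = β + k/2`. -/
noncomputable def nol {m : ℕ} (k : ℕ) (ws : EuclideanSpace ℝ (Fin m))
    (w : EuclideanSpace ℝ (Fin m)) : ℝ :=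
  (1 / (k : ℝ) ^ 2) *
    (((((k : ℝ) ^ 2 - k) / (2 * π)) + (k : ℝ) / 2) * ‖w‖ ^ 2
      - 2 * (k : ℝ) * g w ws
      - 2 * (((k : ℝ) ^ 2 - k) / (2 * π)) * ‖w‖ * ‖ws‖
      + ((((k : ℝ) ^ 2 - k) / (2 * π)) + (k : ℝ) / 2) * ‖ws‖ ^ 2)

/-- The gradient of the no-overlap population loss: `G(0) = 0` and, for `w ≠ 0`,
`G(w) = (1/k²)·[(k + (k²−k)/π − (k‖w*‖ sin θ_{w,w*})/(π‖w‖) − ((k²−k)‖w*‖)/(π‖w‖))·w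
        − (k/π)·(π − θ_{w,w*})·w*]`. -/
noncomputable def nG {m : ℕ} (k : ℕ) (ws : EuclideanSpace ℝ (Fin m))
    (w : EuclideanSpace ℝ (Fin m)) : EuclideanSpace ℝ (Fin m) :=
  if w = 0 then 0 else
    (1 / (k : ℝ) ^ 2) •
      ((((k : ℝ) + ((k : ℝ) ^ 2 - k) / π
          - ((k : ℝ) * ‖ws‖ * Real.sin (angle w ws)) / (π * ‖w‖)
          - (((k : ℝ) ^ 2 - k) * ‖ws‖) / (π * ‖w‖)) • w)
        - (((k : ℝ) / π) * (π - angle w ws)) • ws)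

/-- `α(k) = 1/k + (k²−k)/(πk²)`. -/
noncomputable def alphac (k : ℕ) : ℝ := 1 / (k : ℝ) + ((k : ℝ) ^ 2 - k) / (π * (k : ℝ) ^ 2)

/-! A gradient step maps `w` to `A w + B w*` with
`A = 1 − λα + λ‖w*‖(sin θ + k − 1)/(πk‖w‖) ≥ 1 − λα > 0` and `B = λ(π − θ)/(πk) ≥ 0`.
Such a step never increases the angle to `w*` and multiplies the distance `‖w‖ sin θ` from `w`
to the line `ℝ w*` by `A`. While `θ > π/2` we have `sin θ ≥ sin θ₀`, and `A` is large enough for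
that distance, hence `‖w‖`, to stay above `μ = min {‖w₀‖ sin θ₀, ‖w*‖ sin² θ₀/(απ)}`. Once
`θ ≤ π/2` the cross term of `‖A w + B w*‖²` is nonnegative: either `A‖w‖` alone stays above
`min {μ, ‖w*‖/8}`, or `k = 1`, `θ` is small and the `B w*` term makes up the difference. -/

section InnerProductSpace

variable {E : Type*} [NormedAddCommGroup E] [InnerProductSpace ℝ E]

lemma norm_smul_add_smul_sq (u v : E) (a b : ℝ) :
    ‖a • u + b • v‖ ^ 2 = a ^ 2 * ‖u‖ ^ 2 + 2 * a * b * ⟪u, v⟫ + b ^ 2 * ‖v‖ ^ 2 := by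
  rw [norm_add_sq_real, real_inner_smul_left, real_inner_smul_right, norm_smul, norm_smul,
    Real.norm_eq_abs, Real.norm_eq_abs, mul_pow, mul_pow, sq_abs, sq_abs]
  ring

lemma norm_smul_add_smul_mul_sin_angle (u : E) {v : E} (hv : v ≠ 0) {a : ℝ} (ha : 0 ≤ a)
    (b : ℝ) :
    ‖a • u + b • v‖ * sin (angle (a • u + b • v) v) = a * (‖u‖ * sin (angle u v)) := by
  have hv' : ‖v‖ ≠ 0 := norm_ne_zero_iff.2 hv
  have hx := sin_angle_mul_norm_mul_norm (a • u + b • v) v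
  have hu := sin_angle_mul_norm_mul_norm u v
  -- adding a multiple of `v` does not change the Gram determinant with `v`
  have hgram : ⟪a • u + b • v, a • u + b • v⟫ * ⟪v, v⟫ - ⟪a • u + b • v, v⟫ * ⟪a • u + b • v, v⟫
      = a ^ 2 * (⟪u, u⟫ * ⟪v, v⟫ - ⟪u, v⟫ * ⟪u, v⟫) := by
    rw [real_inner_self_eq_norm_sq (a • u + b • v), norm_smul_add_smul_sq, inner_add_left,
      real_inner_smul_left, real_inner_smul_left, real_inner_self_eq_norm_sq,
      real_inner_self_eq_norm_sq]
    ring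
  rw [hgram, Real.sqrt_mul (sq_nonneg a), Real.sqrt_sq ha, ← hu] at hx
  apply mul_right_cancel₀ hv'
  linear_combination hx

lemma cos_angle_le_cos_angle_smul_add_smul {u v : E} (hu : u ≠ 0) (hv : v ≠ 0) {a b : ℝ}
    (ha : 0 ≤ a) (hb : 0 ≤ b) (hx : a • u + b • v ≠ 0) :
    cos (angle u v) ≤ cos (angle (a • u + b • v) v) := by
  have hu' : 0 < ‖u‖ := norm_pos_iff.2 hu
  have hv' : 0 < ‖v‖ := norm_pos_iff.2 hv
  have hx' : 0 < ‖a • u + b • v‖ := norm_pos_iff.2 hx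
  have hnorm_au : ‖a • u‖ = a * ‖u‖ := by rw [norm_smul, Real.norm_of_nonneg ha]
  have hnorm_bv : ‖b • v‖ = b * ‖v‖ := by rw [norm_smul, Real.norm_of_nonneg hb]
  rw [cos_angle, cos_angle, div_le_div_iff₀ (by positivity) (by positivity), inner_add_left,
    real_inner_smul_left, real_inner_smul_left, real_inner_self_eq_norm_mul_norm]
  have hbvv : 0 ≤ b * ‖v‖ * ‖v‖ := by positivity
  rcases le_or_gt 0 ⟪u, v⟫ with hc | hc
  · have htri : ‖a • u + b • v‖ ≤ a * ‖u‖ + b * ‖v‖ := by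
      simpa only [hnorm_au, hnorm_bv] using norm_add_le (a • u) (b • v)
    nlinarith [mul_le_mul_of_nonneg_right (mul_le_mul_of_nonneg_left htri hc) hv'.le,
      mul_le_mul_of_nonneg_left (real_inner_le_norm u v) hbvv]
  · have htri : a * ‖u‖ - b * ‖v‖ ≤ ‖a • u + b • v‖ := by
      have := norm_sub_le (a • u + b • v) (b • v)
      rw [add_sub_cancel_right, hnorm_au, hnorm_bv] at this
      linarith
    nlinarith [mul_le_mul_of_nonneg_right (mul_le_mul_of_nonpos_left htri hc.le) hv'.le,
      mul_le_mul_of_nonneg_left (neg_le_of_abs_le (abs_real_inner_le_norm u v)) hbvv]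

lemma mul_norm_le_norm_smul_add_smul {u v : E} (h : 0 ≤ ⟪u, v⟫) {a b : ℝ} (ha : 0 ≤ a)
    (hb : 0 ≤ b) : a * ‖u‖ ≤ ‖a • u + b • v‖ := by
  refine le_of_sq_le_sq ?_ (norm_nonneg _)
  rw [norm_smul_add_smul_sq, mul_pow]
  nlinarith [mul_nonneg (mul_nonneg ha hb) h, sq_nonneg (b * ‖v‖)]

lemma le_norm_smul_add_smul_of_half_le_cos {u v : E} (hcos : 1 / 2 ≤ cos (angle u v))
    {r lam a b : ℝ} (hr : 0 ≤ r) (hru : r ≤ ‖u‖) (hrv : 8 * r ≤ ‖v‖) (hlam0 : 0 ≤ lam)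
    (hlam1 : lam ≤ 1 / 2) (ha : 1 - lam ≤ a) (hb : lam / 2 ≤ b) :
    r ≤ ‖a • u + b • v‖ := by
  have hau : (1 - lam) * r ≤ a * ‖u‖ := mul_le_mul ha hru hr (by linarith)
  have hbv : lam / 2 * (8 * r) ≤ b * ‖v‖ := mul_le_mul hb hrv (by linarith) (by linarith)
  have hcross : (1 - lam) * r * (lam / 2 * (8 * r)) ≤ a * ‖u‖ * (b * ‖v‖) :=
    mul_le_mul hau hbv (by positivity) (by nlinarith [norm_nonneg u])
  have hsq : ((1 - lam) * r) ^ 2 ≤ (a * ‖u‖) ^ 2 :=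
    pow_le_pow_left₀ (mul_nonneg (by linarith) hr) hau 2
  refine le_of_sq_le_sq ?_ (norm_nonneg _)
  rw [norm_smul_add_smul_sq, ← cos_angle_mul_norm_mul_norm]
  -- `(1 - λ)² + 4λ(1 - λ) = 1 + λ(2 - 3λ) ≥ 1`
  nlinarith [mul_le_mul_of_nonneg_right hcos (mul_nonneg (mul_nonneg (by linarith : 0 ≤ a)
    (norm_nonneg u)) (mul_nonneg (by linarith : 0 ≤ b) (norm_nonneg v))),
    sq_nonneg (b * ‖v‖), mul_nonneg (mul_nonneg hlam0 (by linarith : 0 ≤ 2 - 3 * lam))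
      (mul_nonneg hr hr)]

end InnerProductSpace

section GradientStep

variable {E : Type*} [NormedAddCommGroup E] [InnerProductSpace ℝ E]

lemma alphac_eq {k : ℕ} (hk : k ≠ 0) : alphac k = (π + k - 1) / (π * k) := by
  rw [alphac]
  field_simp
  ring

lemma alphac_one : alphac 1 = 1 := by
  simp [alphac]

lemma alphac_pos {k : ℕ} (hk : 1 ≤ k) : 0 < alphac k := by
  have hK : (1 : ℝ) ≤ k := by exact_mod_cast hk
  rw [alphac_eq (by omega)]
  exact div_pos (by linarith [pi_pos]) (by positivity)

lemma alphac_le_one {k : ℕ} (hk : 1 ≤ k) : alphac k ≤ 1 := by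
  have hK : (1 : ℝ) ≤ k := by exact_mod_cast hk
  rw [alphac_eq (by omega), div_le_one (by positivity)]
  nlinarith [pi_gt_three]

/-- `A` in `w - λ G(w) = A w + B w*`. -/
noncomputable def gdCoeff (k : ℕ) (lam : ℝ) (ws u : E) : ℝ :=
  1 - lam * alphac k + lam * ‖ws‖ * (sin (angle u ws) + (k - 1)) / (π * k * ‖u‖)

/-- `B` in `w - λ G(w) = A w + B w*`. -/
noncomputable def gdCoeffStar (k : ℕ) (lam : ℝ) (ws u : E) : ℝ :=
  lam * (π - angle u ws) / (π * k)

lemma sub_smul_nG {m k : ℕ} (hk : k ≠ 0) (lam : ℝ) (ws : EuclideanSpace ℝ (Fin m))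
    {u : EuclideanSpace ℝ (Fin m)} (hu : u ≠ 0) :
    u - lam • nG k ws u = gdCoeff k lam ws u • u + gdCoeffStar k lam ws u • ws := by
  have hu' : ‖u‖ ≠ 0 := norm_ne_zero_iff.2 hu
  have hA : 1 - lam * (1 / (k : ℝ) ^ 2 * ((k : ℝ) + ((k : ℝ) ^ 2 - k) / π
      - ((k : ℝ) * ‖ws‖ * sin (angle u ws)) / (π * ‖u‖)
      - (((k : ℝ) ^ 2 - k) * ‖ws‖) / (π * ‖u‖))) = gdCoeff k lam ws u := by
    rw [gdCoeff, alphac]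
    field_simp
    ring
  have hB : lam * (1 / (k : ℝ) ^ 2 * ((k : ℝ) / π * (π - angle u ws)))
      = gdCoeffStar k lam ws u := by
    rw [gdCoeffStar]
    field_simp
  rw [nG, if_neg hu, ← hA, ← hB]
  module

lemma one_sub_mul_alphac_le_gdCoeff {k : ℕ} (hk : 1 ≤ k) {lam : ℝ} (hlam : 0 ≤ lam)
    (ws u : E) : 1 - lam * alphac k ≤ gdCoeff k lam ws u := by
  have hK : (1 : ℝ) ≤ k := by exact_mod_cast hk
  have hsin := sin_angle_nonneg u ws
  have : 0 ≤ lam * ‖ws‖ * (sin (angle u ws) + (k - 1)) / (π * k * ‖u‖) :=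
    div_nonneg (mul_nonneg (by positivity) (by linarith)) (by positivity)
  rw [gdCoeff]
  linarith

lemma gdCoeff_pos {k : ℕ} (hk : 1 ≤ k) {lam : ℝ} (hlam0 : 0 ≤ lam) (hlam1 : lam < 1)
    (ws u : E) : 0 < gdCoeff k lam ws u :=
  lt_of_lt_of_le (by nlinarith [alphac_le_one hk, alphac_pos hk])
    (one_sub_mul_alphac_le_gdCoeff hk hlam0 ws u)

lemma gdCoeffStar_nonneg (k : ℕ) {lam : ℝ} (hlam : 0 ≤ lam) (ws u : E) :
    0 ≤ gdCoeffStar k lam ws u :=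
  div_nonneg (mul_nonneg hlam (sub_nonneg.2 (angle_le_pi u ws))) (by positivity)

lemma gdCoeff_mul_norm {k : ℕ} (hk : k ≠ 0) (lam : ℝ) (ws : E) {u : E} (hu : u ≠ 0) :
    gdCoeff k lam ws u * ‖u‖
      = (1 - lam * alphac k) * ‖u‖ + lam * ‖ws‖ * (sin (angle u ws) + (k - 1)) / (π * k) := by
  have hu' : ‖u‖ ≠ 0 := norm_ne_zero_iff.2 hu
  rw [gdCoeff]
  field_simp

lemma le_gdCoeff_mul_norm_mul_sin {k : ℕ} (hk : 1 ≤ k) {lam : ℝ} (hlam0 : 0 ≤ lam)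
    (hlam1 : lam ≤ 1) {ws u : E} (hu : u ≠ 0) {θ₀ μ : ℝ} (hcos : cos θ₀ ≤ cos (angle u ws))
    (hneg : cos (angle u ws) < 0) (hμu : μ ≤ ‖u‖ * sin (angle u ws))
    (hμ : μ ≤ ‖ws‖ * sin θ₀ ^ 2 / (alphac k * π)) :
    μ ≤ gdCoeff k lam ws u * (‖u‖ * sin (angle u ws)) := by
  have hK : (1 : ℝ) ≤ k := by exact_mod_cast hk
  have hα0 := alphac_pos hk
  have hlα : 0 ≤ 1 - lam * alphac k := by nlinarith [alphac_le_one hk]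
  set s := sin (angle u ws)
  have hs0 : 0 ≤ s := sin_angle_nonneg u ws
  have hs1 : s ≤ 1 := sin_le_one _
  have hsin : sin θ₀ ^ 2 ≤ s ^ 2 := by
    nlinarith [sin_sq_add_cos_sq θ₀, sin_sq_add_cos_sq (angle u ws)]
  -- `(s + k - 1) s - k s² = (k - 1) s (1 - s)`
  have hks : k * sin θ₀ ^ 2 ≤ (s + (k - 1)) * s := by
    nlinarith [mul_nonneg (mul_nonneg (sub_nonneg.2 hK) hs0) (sub_nonneg.2 hs1)]
  calc μ = (1 - lam * alphac k) * μ + lam * alphac k * μ := by ring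
    _ ≤ (1 - lam * alphac k) * (‖u‖ * s)
          + lam * alphac k * (‖ws‖ * sin θ₀ ^ 2 / (alphac k * π)) := by gcongr
    _ = (1 - lam * alphac k) * (‖u‖ * s) + lam * ‖ws‖ * (k * sin θ₀ ^ 2) / (π * k) := by
      field_simp
    _ ≤ (1 - lam * alphac k) * (‖u‖ * s) + lam * ‖ws‖ * ((s + (k - 1)) * s) / (π * k) := by
      gcongr
    _ = gdCoeff k lam ws u * (‖u‖ * s) := by
      rw [← mul_assoc (gdCoeff k lam ws u), gdCoeff_mul_norm (by omega) lam ws hu]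
      ring

lemma le_gdCoeff_mul_norm {k : ℕ} (hk : 1 ≤ k) {lam : ℝ} (hlam0 : 0 ≤ lam) (hlam1 : lam ≤ 1)
    {ws u : E} (hu : u ≠ 0) {M : ℝ} (hMu : M ≤ ‖u‖) (hM8 : M ≤ ‖ws‖ / 8)
    (hθ : π + k - 1 ≤ 8 * (sin (angle u ws) + (k - 1))) :
    M ≤ gdCoeff k lam ws u * ‖u‖ := by
  have hK : (1 : ℝ) ≤ k := by exact_mod_cast hk
  have hlα : 0 ≤ 1 - lam * alphac k := by nlinarith [alphac_le_one hk, alphac_pos hk]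
  have hlα' : 0 ≤ lam * alphac k := mul_nonneg hlam0 (alphac_pos hk).le
  calc M = (1 - lam * alphac k) * M + lam * alphac k * M := by ring
    _ ≤ (1 - lam * alphac k) * ‖u‖ + lam * alphac k * (‖ws‖ / 8) := by gcongr
    _ = (1 - lam * alphac k) * ‖u‖ + lam * ‖ws‖ * (π + k - 1) / (8 * (π * k)) := by
      rw [alphac_eq (by omega)]
      field_simp
    _ ≤ (1 - lam * alphac k) * ‖u‖
          + lam * ‖ws‖ * (8 * (sin (angle u ws) + (k - 1))) / (8 * (π * k)) := by gcongr
    _ = gdCoeff k lam ws u * ‖u‖ := by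
      rw [gdCoeff_mul_norm (by omega) lam ws hu]
      field_simp

lemma le_norm_gdStep_of_cos_nonneg {k : ℕ} (hk : 1 ≤ k) {lam : ℝ} (hlam0 : 0 ≤ lam)
    (hlam1 : lam ≤ 1 / 2) {ws u : E} (hu : u ≠ 0) (hcos : 0 ≤ cos (angle u ws)) {M : ℝ}
    (hM0 : 0 ≤ M) (hMu : M ≤ ‖u‖) (hM8 : M ≤ ‖ws‖ / 8) :
    M ≤ ‖gdCoeff k lam ws u • u + gdCoeffStar k lam ws u • ws‖ := by
  have hA := gdCoeff_pos hk hlam0 (by linarith) ws u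
  have hB := gdCoeffStar_nonneg k hlam0 ws u
  have hsin := sin_angle_nonneg u ws
  by_cases hθ : π + k - 1 ≤ 8 * (sin (angle u ws) + (k - 1))
  · have hinner : 0 ≤ ⟪u, ws⟫ := by
      rw [← cos_angle_mul_norm_mul_norm]
      positivity
    exact (le_gdCoeff_mul_norm hk hlam0 (by linarith) hu hMu hM8 hθ).trans
      (mul_norm_le_norm_smul_add_smul hinner hA.le hB)
  have hk1 : k = 1 := by
    by_contra hne
    have hK : (2 : ℝ) ≤ k := by exact_mod_cast (show 2 ≤ k by omega)
    linarith [pi_lt_four]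
  subst hk1
  have hs : sin (angle u ws) ≤ 1 / 2 := by
    push_cast at hθ
    linarith [pi_lt_four]
  have hcos2 : 1 / 2 ≤ cos (angle u ws) := by
    nlinarith [sin_sq_add_cos_sq (angle u ws)]
  have hθ2 : angle u ws ≤ π / 2 := by
    by_contra! h
    linarith [cos_neg_of_pi_div_two_lt_of_lt h (by linarith [angle_le_pi u ws, pi_pos])]
  refine le_norm_smul_add_smul_of_half_le_cos hcos2 hM0 hMu (by linarith) hlam0 hlam1 ?_ ?_
  · simpa only [alphac_one, mul_one] using one_sub_mul_alphac_le_gdCoeff le_rfl hlam0 ws u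
  · rw [gdCoeffStar, le_div_iff₀ (by positivity)]
    push_cast
    nlinarith

def GDInvariant (θ₀ μ M : ℝ) (ws u : E) : Prop :=
  M ≤ ‖u‖ ∧ cos θ₀ ≤ cos (angle u ws) ∧
    (cos (angle u ws) < 0 → μ ≤ ‖u‖ * sin (angle u ws))

lemma GDInvariant.gdStep {k : ℕ} (hk : 1 ≤ k) {lam : ℝ} (hlam0 : 0 ≤ lam)
    (hlam1 : lam ≤ 1 / 2) {ws u : E} (hws : ws ≠ 0) {θ₀ μ M : ℝ} (hM0 : 0 < M) (hMμ : M ≤ μ)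
    (hM8 : M ≤ ‖ws‖ / 8) (hμ : μ ≤ ‖ws‖ * sin θ₀ ^ 2 / (alphac k * π))
    (h : GDInvariant θ₀ μ M ws u) :
    GDInvariant θ₀ μ M ws (gdCoeff k lam ws u • u + gdCoeffStar k lam ws u • ws) := by
  obtain ⟨hMu, hcos, hobtuse⟩ := h
  have hu : u ≠ 0 := norm_pos_iff.1 (hM0.trans_le hMu)
  have hA := gdCoeff_pos hk hlam0 (by linarith) ws u
  have hdist (hneg : cos (angle u ws) < 0) :
      μ ≤ ‖gdCoeff k lam ws u • u + gdCoeffStar k lam ws u • ws‖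
        * sin (angle (gdCoeff k lam ws u • u + gdCoeffStar k lam ws u • ws) ws) := by
    rw [norm_smul_add_smul_mul_sin_angle u hws hA.le]
    exact le_gdCoeff_mul_norm_mul_sin hk hlam0 (by linarith) hu hcos hneg (hobtuse hneg) hμ
  have hMv : M ≤ ‖gdCoeff k lam ws u • u + gdCoeffStar k lam ws u • ws‖ := by
    rcases lt_or_ge (cos (angle u ws)) 0 with hneg | hnonneg
    · exact hMμ.trans ((hdist hneg).trans (mul_le_of_le_one_right (norm_nonneg _) (sin_le_one _)))
    · exact le_norm_gdStep_of_cos_nonneg hk hlam0 hlam1 hu hnonneg hM0.le hMu hM8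
  have hmono := cos_angle_le_cos_angle_smul_add_smul hu hws hA.le
    (gdCoeffStar_nonneg k hlam0 ws u) (norm_pos_iff.1 (hM0.trans_le hMv))
  exact ⟨hMv, hcos.trans hmono, fun hneg => hdist (hmono.trans_lt hneg)⟩

end GradientStep

theorem stmt12_general (k m : ℕ) (hk : 1 ≤ k)
    (ws : EuclideanSpace ℝ (Fin m)) (hws : ws ≠ 0)
    (lam : ℝ) (hlam0 : 0 < lam) (hlam1 : lam < 1 / 2)
    (w : ℕ → EuclideanSpace ℝ (Fin m)) (hw0 : w 0 ≠ 0)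
    (hθ0 : 0 < angle (w 0) ws) (hθπ : angle (w 0) ws < π)
    (hrec : ∀ t : ℕ, w (t + 1) = w t - lam • nG k ws (w t)) :
    ∀ t : ℕ,
      min (min (‖w 0‖ * Real.sin (angle (w 0) ws))
          (‖ws‖ * Real.sin (angle (w 0) ws) ^ 2 / (alphac k * π)))
        (‖ws‖ / 8) ≤ ‖w t‖ := by
  have hs0 : 0 < sin (angle (w 0) ws) := sin_pos_of_pos_of_lt_pi hθ0 hθπ
  have hws' : 0 < ‖ws‖ := norm_pos_iff.2 hws
  set μ := min (‖w 0‖ * sin (angle (w 0) ws))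
    (‖ws‖ * sin (angle (w 0) ws) ^ 2 / (alphac k * π))
  set M := min μ (‖ws‖ / 8)
  have hM0 : 0 < M := lt_min (lt_min (mul_pos (norm_pos_iff.2 hw0) hs0)
    (div_pos (by positivity) (mul_pos (alphac_pos hk) pi_pos))) (by positivity)
  have hinv (t : ℕ) : GDInvariant (angle (w 0) ws) μ M ws (w t) := by
    induction t with
    | zero =>
      have hμ : μ ≤ ‖w 0‖ * sin (angle (w 0) ws) := min_le_left _ _
      exact ⟨(min_le_left _ _).trans (hμ.trans (mul_le_of_le_one_right (norm_nonneg _)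
        (sin_le_one _))), le_rfl, fun _ => hμ⟩
    | succ t ih =>
      rw [hrec, sub_smul_nG (by omega) lam ws (norm_pos_iff.1 (hM0.trans_le ih.1))]
      exact ih.gdStep hk hlam0.le hlam1.le hws hM0 (min_le_left _ _) (min_le_right _ _)
        (min_le_right _ _)
  exact fun t => (hinv t).1

/-- If gradient descent `w_{t+1} = w_t − λ·G(w_t)` with `0 < λ < 1/2` is initialized at a
nonzero `w_0` with `0 < θ_0 < π`, then for every `t`,
`‖w_t‖ ≥ min {‖w_0‖ sin θ_0, ‖w*‖ sin² θ_0 / (α(k)π), ‖w*‖/8}`. -/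
theorem stmt12 (k m : ℕ) (hk : 1 ≤ k) (hm : 2 ≤ m)
    (ws : EuclideanSpace ℝ (Fin m)) (hws : ws ≠ 0)
    (lam : ℝ) (hlam0 : 0 < lam) (hlam1 : lam < 1 / 2)
    (w : ℕ → EuclideanSpace ℝ (Fin m)) (hw0 : w 0 ≠ 0)
    (hθ0 : 0 < angle (w 0) ws) (hθπ : angle (w 0) ws < π)
    (hrec : ∀ t : ℕ, w (t + 1) = w t - lam • nG k ws (w t)) :
    ∀ t : ℕ,
      min (min (‖w 0‖ * Real.sin (angle (w 0) ws))
          (‖ws‖ * Real.sin (angle (w 0) ws) ^ 2 / (alphac k * π)))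
        (‖ws‖ / 8) ≤ ‖w t‖ :=
  stmt12_general k m hk ws hws lam hlam0 hlam1 w hw0 hθ0 hθπ hrec
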